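/- Let T be a neutral tree on n₁ ≥ 7 vertices, and let T† be obtained from T by the leaf-connecting operation: attach d_v new leaf vertices to each vertex v of T, then pair up all new leaves and join each pair by an edge. Then T† is neutral, i.e. 4|E†| · Σ_{ij ∈ E†} d_i d_j = (Σ_{ij ∈ E†}(d_i + d_j))². Moreover |V†| = 3n₁ − 2 and T† is not a tree. -/

import Mathlib

open Finset

attribute [local instance] Classical.propDecidable

namespace Neutral

/-- Number of edges of `G`. -/
noncomputable def m {V : Type*} [Fintype V] (G : SimpleGraph V) : ℕ :=
  G.edgeFinset.card

/-- `∑_{uv ∈ E} d_u · d_v`, each edge counted once. -/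
noncomputable def dd {V : Type*} [Fintype V] (G : SimpleGraph V) : ℕ :=
  ∑ e ∈ G.edgeFinset,
    Sym2.lift ⟨fun u v => G.degree u * G.degree v, fun _ _ => Nat.mul_comm _ _⟩ e

/-- `∑_{uv ∈ E} (d_u + d_v)`, each edge counted once. -/
noncomputable def ds {V : Type*} [Fintype V] (G : SimpleGraph V) : ℕ :=
  ∑ e ∈ G.edgeFinset,
    Sym2.lift ⟨fun u v => G.degree u + G.degree v, fun _ _ => Nat.add_comm _ _⟩ e

/-- `∑_{uv ∈ E} (d_u² + d_v²)`, each edge counted once. -/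
noncomputable def dsq {V : Type*} [Fintype V] (G : SimpleGraph V) : ℕ :=
  ∑ e ∈ G.edgeFinset,
    Sym2.lift ⟨fun u v => G.degree u ^ 2 + G.degree v ^ 2, fun _ _ => Nat.add_comm _ _⟩ e

/-- A graph is irregular if it is not regular of any degree. -/
def Irregular {V : Type*} [Fintype V] (G : SimpleGraph V) : Prop :=
  ¬ ∃ k, G.IsRegularOfDegree k

end Neutral

open Neutral

namespace Neutral

/-- The index type of the new leaves in the leaf-connecting operation:
`d_v` new leaves are attached to every vertex `v`. -/
noncomputable def Leaves {V : Type*} [Fintype V] (G : SimpleGraph V) : Type _ :=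
  Σ v : V, Fin (G.degree v)

noncomputable instance {V : Type*} [Fintype V] (G : SimpleGraph V) : Fintype (Leaves G) := by
  unfold Leaves; infer_instance

/-- One-directional adjacency for the leaf-connecting operation: the old edges of `G`
are kept, each new leaf is attached to its base vertex, and the new leaves are paired
up by the matching `σ`. -/
def lcS {V : Type*} [Fintype V] (G : SimpleGraph V) (σ : Leaves G → Leaves G) :
    (V ⊕ Leaves G) → (V ⊕ Leaves G) → Prop
  | Sum.inl u, Sum.inl v => G.Adj u v
  | Sum.inl u, Sum.inr l => l.1 = u
  | Sum.inr a, Sum.inr b => σ a = b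
  | _, _ => False

/-- The graph `G†` produced by the leaf-connecting operation with matching `σ`. -/
noncomputable def LeafConn {V : Type*} [Fintype V] (G : SimpleGraph V)
    (σ : Leaves G → Leaves G) : SimpleGraph (V ⊕ Leaves G) where
  Adj x y := x ≠ y ∧ (lcS G σ x y ∨ lcS G σ y x)
  symm := ⟨fun _ _ h => ⟨Ne.symm h.1, h.2.symm⟩⟩
  loopless := ⟨fun _ h => h.1 rfl⟩

end Neutral

/-!
In `G†` an old vertex `v` has degree `2 d_v`, each new vertex has degree `2`, and the neighbours
of `v` are its old neighbours together with its `d_v` new leaves. Double counting over darts gives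
`ds G = ∑ d_v²` and `2 dd G = ∑_v d_v ∑_{u ~ v} d_u`, from which, for every graph `G`,
`m G† = 4 m G`, `ds G† = 4 ds G + 8 m G` and `dd G† = 4 dd G + 4 ds G + 4 m G`.
Hence `4 m G† dd G† - (ds G†)² = 16 (4 m G dd G - (ds G)²)`, so neutrality is inherited.
For a tree on `n` vertices, `T†` has `n + 2(n - 1)` vertices but `4(n - 1)` edges, too many for a
tree once `n ≥ 2`.
-/

namespace Neutral

open SimpleGraph

section DoubleCounting

variable {V : Type*} [Fintype V] (G : SimpleGraph V)

theorem sum_darts_edge {M : Type*} [AddCommMonoid M] (f : Sym2 V → M) :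
    ∑ d : G.Dart, f d.edge = 2 • ∑ e ∈ G.edgeFinset, f e := by
  rw [← Finset.sum_fiberwise_of_maps_to (g := Dart.edge) (t := G.edgeFinset)
    (fun d _ => G.mem_edgeFinset.2 d.edge_mem), Finset.smul_sum]
  refine Finset.sum_congr rfl fun e he => ?_
  rw [Finset.sum_congr rfl fun d hd => congrArg f (Finset.mem_filter.1 hd).2, Finset.sum_const,
    G.dart_edge_fiber_card e (G.mem_edgeFinset.1 he)]

theorem sum_darts_fst_snd {M : Type*} [AddCommMonoid M] (g : V → V → M) :
    ∑ d : G.Dart, g d.fst d.snd = ∑ v, ∑ u ∈ G.neighborFinset v, g v u := by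
  rw [← Finset.sum_fiberwise_of_maps_to (g := fun d : G.Dart => d.fst) (t := Finset.univ)
    (fun _ _ => Finset.mem_univ _)]
  refine Finset.sum_congr rfl fun v _ => ?_
  rw [G.dart_fst_fiber, Finset.sum_image fun _ _ _ _ h => G.dartOfNeighborSet_injective v h]
  exact (Finset.sum_subtype _ (fun _ => G.mem_neighborFinset _ _) (g v)).symm

theorem two_nsmul_sum_edgeFinset_lift {M : Type*} [AddCommMonoid M] (f : V → V → M)
    (hf : ∀ u v, f u v = f v u) :
    2 • ∑ e ∈ G.edgeFinset, Sym2.lift ⟨f, hf⟩ e = ∑ v, ∑ u ∈ G.neighborFinset v, f v u := by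
  rw [← sum_darts_fst_snd, ← sum_darts_edge]
  rfl

theorem sum_sum_neighborFinset_eq_sum_degree_nsmul {M : Type*} [AddCommMonoid M] (g : V → M) :
    ∑ v, ∑ u ∈ G.neighborFinset v, g u = ∑ v, G.degree v • g v := by
  rw [← sum_darts_fst_snd G (fun _ u => g u),
    ← Equiv.sum_comp (Function.Involutive.toPerm _ Dart.symm_involutive)]
  simp only [Function.Involutive.coe_toPerm, Dart.symm_toProd, Prod.snd_swap]
  rw [sum_darts_fst_snd G (fun v _ => g v)]
  simp only [Finset.sum_const, card_neighborFinset_eq_degree]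

theorem two_mul_m : 2 * m G = ∑ v, G.degree v :=
  G.sum_degrees_eq_twice_card_edges.symm

theorem ds_eq_sum_degree_sq : ds G = ∑ v, G.degree v ^ 2 := by
  have h := two_nsmul_sum_edgeFinset_lift G (fun u v => G.degree u + G.degree v)
    fun _ _ => Nat.add_comm _ _
  simp only [Finset.sum_add_distrib, Finset.sum_const, card_neighborFinset_eq_degree,
    sum_sum_neighborFinset_eq_sum_degree_nsmul, smul_eq_mul, ← sq] at h
  rw [ds]
  omega

theorem two_mul_dd : 2 * dd G = ∑ v, G.degree v * ∑ u ∈ G.neighborFinset v, G.degree u := by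
  simp only [Finset.mul_sum]
  exact two_nsmul_sum_edgeFinset_lift G (fun u v => G.degree u * G.degree v) _

end DoubleCounting

section LeafConnecting

open Sum

variable {V : Type*} [Fintype V] (G : SimpleGraph V) {σ : Leaves G → Leaves G}

theorem sum_leaves {M : Type*} [AddCommMonoid M] (g : Leaves G → M) :
    ∑ a, g a = ∑ v, ∑ i : Fin (G.degree v), g ⟨v, i⟩ :=
  Fintype.sum_sigma g

theorem sum_leaves_comp_fst {M : Type*} [AddCommMonoid M] (g : V → M) :
    ∑ a : Leaves G, g a.1 = ∑ v, G.degree v • g v := by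
  simp [sum_leaves]

theorem card_leaves : Fintype.card (Leaves G) = 2 * m G := by
  have h := sum_leaves_comp_fst G fun _ => 1
  simp only [Finset.sum_const, Finset.card_univ, smul_eq_mul, mul_one] at h
  rw [h, two_mul_m]

theorem leafConn_adj_inl_inl {u v : V} : (LeafConn G σ).Adj (inl u) (inl v) ↔ G.Adj u v := by
  simp only [LeafConn, lcS, ne_eq, inl.injEq, G.adj_comm v u, or_self, and_iff_right_iff_imp]
  exact G.ne_of_adj

theorem leafConn_adj_inl_inr {v : V} {a : Leaves G} :
    (LeafConn G σ).Adj (inl v) (inr a) ↔ a.1 = v := by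
  simp [LeafConn, lcS]

theorem leafConn_adj_inr_inl {a : Leaves G} {v : V} :
    (LeafConn G σ).Adj (inr a) (inl v) ↔ a.1 = v := by
  simp [LeafConn, lcS]

theorem leafConn_adj_inr_inr (hinv : Function.Involutive σ) (hnf : ∀ a, σ a ≠ a)
    {a b : Leaves G} : (LeafConn G σ).Adj (inr a) (inr b) ↔ σ a = b := by
  simp only [LeafConn, lcS, ne_eq, inr.injEq]
  constructor
  · rintro ⟨-, h | h⟩
    exacts [h, h ▸ hinv b]
  · rintro rfl
    exact ⟨(hnf a).symm, Or.inl rfl⟩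

theorem sum_neighborFinset_leafConn_inl {M : Type*} [AddCommMonoid M] (F : V ⊕ Leaves G → M)
    (v : V) :
    ∑ y ∈ (LeafConn G σ).neighborFinset (inl v), F y =
      ∑ u ∈ G.neighborFinset v, F (inl u) + ∑ i : Fin (G.degree v), F (inr ⟨v, i⟩) := by
  simp only [neighborFinset_eq_filter, Finset.sum_filter, Fintype.sum_sum_type,
    leafConn_adj_inl_inl, leafConn_adj_inl_inr, sum_leaves]
  rw [Fintype.sum_eq_single v fun w hw => Finset.sum_eq_zero fun i _ => if_neg hw]
  exact congrArg _ (Finset.sum_congr rfl fun i _ => if_pos rfl)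

theorem sum_neighborFinset_leafConn_inr (hinv : Function.Involutive σ) (hnf : ∀ a, σ a ≠ a)
    {M : Type*} [AddCommMonoid M] (F : V ⊕ Leaves G → M) (a : Leaves G) :
    ∑ y ∈ (LeafConn G σ).neighborFinset (inr a), F y = F (inl a.1) + F (inr (σ a)) := by
  simp only [neighborFinset_eq_filter, Finset.sum_filter, Fintype.sum_sum_type,
    leafConn_adj_inr_inl, leafConn_adj_inr_inr G hinv hnf, Finset.sum_ite_eq,
    Finset.mem_univ, if_true]

theorem degree_leafConn_inl (v : V) : (LeafConn G σ).degree (inl v) = 2 * G.degree v := by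
  rw [← card_neighborFinset_eq_degree, Finset.card_eq_sum_ones, sum_neighborFinset_leafConn_inl]
  simp [two_mul]

theorem degree_leafConn_inr (hinv : Function.Involutive σ) (hnf : ∀ a, σ a ≠ a) (a : Leaves G) :
    (LeafConn G σ).degree (inr a) = 2 := by
  rw [← card_neighborFinset_eq_degree, Finset.card_eq_sum_ones,
    sum_neighborFinset_leafConn_inr G hinv hnf]

theorem sum_neighborFinset_degree_leafConn_inl (hinv : Function.Involutive σ)
    (hnf : ∀ a, σ a ≠ a) (v : V) :
    ∑ y ∈ (LeafConn G σ).neighborFinset (inl v), (LeafConn G σ).degree y =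
      2 * ∑ u ∈ G.neighborFinset v, G.degree u + 2 * G.degree v := by
  simp [sum_neighborFinset_leafConn_inl, degree_leafConn_inl,
    fun i => degree_leafConn_inr G hinv hnf ⟨v, i⟩, Finset.mul_sum, mul_comm]

theorem sum_neighborFinset_degree_leafConn_inr (hinv : Function.Involutive σ)
    (hnf : ∀ a, σ a ≠ a) (a : Leaves G) :
    ∑ y ∈ (LeafConn G σ).neighborFinset (inr a), (LeafConn G σ).degree y =
      2 * G.degree a.1 + 2 := by
  rw [sum_neighborFinset_leafConn_inr G hinv hnf, degree_leafConn_inl,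
    degree_leafConn_inr G hinv hnf]

theorem m_leafConn (hinv : Function.Involutive σ) (hnf : ∀ a, σ a ≠ a) :
    m (LeafConn G σ) = 4 * m G := by
  have h := two_mul_m (LeafConn G σ)
  simp only [Fintype.sum_sum_type, degree_leafConn_inl, degree_leafConn_inr G hinv hnf,
    ← Finset.mul_sum, ← two_mul_m G, Finset.sum_const, Finset.card_univ, card_leaves,
    smul_eq_mul] at h
  omega

theorem ds_leafConn (hinv : Function.Involutive σ) (hnf : ∀ a, σ a ≠ a) :
    ds (LeafConn G σ) = 4 * ds G + 8 * m G := by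
  simp only [ds_eq_sum_degree_sq, Fintype.sum_sum_type, degree_leafConn_inl,
    degree_leafConn_inr G hinv hnf, Finset.sum_const, Finset.card_univ, card_leaves,
    smul_eq_mul, Finset.mul_sum]
  congr 1
  · exact Finset.sum_congr rfl fun v _ => by ring
  · ring

theorem dd_leafConn (hinv : Function.Involutive σ) (hnf : ∀ a, σ a ≠ a) :
    dd (LeafConn G σ) = 4 * dd G + 4 * ds G + 4 * m G := by
  have h : 2 * dd (LeafConn G σ) = 4 * (2 * dd G) + 8 * ds G + 4 * (2 * m G) :=
    calc 2 * dd (LeafConn G σ)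
        = ∑ v, 2 * G.degree v * (2 * ∑ u ∈ G.neighborFinset v, G.degree u + 2 * G.degree v)
          + ∑ a : Leaves G, 2 * (2 * G.degree a.1 + 2) := by
          simp only [two_mul_dd, Fintype.sum_sum_type, degree_leafConn_inl,
            degree_leafConn_inr G hinv hnf, sum_neighborFinset_degree_leafConn_inl G hinv hnf,
            sum_neighborFinset_degree_leafConn_inr G hinv hnf]
      _ = ∑ v, (4 * (G.degree v * ∑ u ∈ G.neighborFinset v, G.degree u)
          + 8 * G.degree v ^ 2 + 4 * G.degree v) := by
          rw [sum_leaves_comp_fst G fun v => 2 * (2 * G.degree v + 2), ← Finset.sum_add_distrib]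
          exact Finset.sum_congr rfl fun v _ => by rw [smul_eq_mul]; ring
      _ = 4 * (2 * dd G) + 8 * ds G + 4 * (2 * m G) := by
          rw [Finset.sum_add_distrib, Finset.sum_add_distrib, ← Finset.mul_sum, ← Finset.mul_sum,
            ← Finset.mul_sum, two_mul_dd, ds_eq_sum_degree_sq, two_mul_m]
  omega

theorem neutral_leafConn (hinv : Function.Involutive σ) (hnf : ∀ a, σ a ≠ a)
    (hG : 4 * m G * dd G = ds G ^ 2) :
    4 * m (LeafConn G σ) * dd (LeafConn G σ) = ds (LeafConn G σ) ^ 2 := by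
  rw [m_leafConn G hinv hnf, dd_leafConn G hinv hnf, ds_leafConn G hinv hnf]
  calc 4 * (4 * m G) * (4 * dd G + 4 * ds G + 4 * m G)
      = 16 * (4 * m G * dd G) + 64 * m G * ds G + 64 * m G ^ 2 := by ring
    _ = (4 * ds G + 8 * m G) ^ 2 := by rw [hG]; ring

theorem card_sum_leaves : Fintype.card (V ⊕ Leaves G) = Fintype.card V + 2 * m G := by
  rw [Fintype.card_sum, card_leaves]

theorem not_isTree_leafConn (hinv : Function.Involutive σ) (hnf : ∀ a, σ a ≠ a)
    (hG : G.IsTree) (hV : 1 < Fintype.card V) : ¬ (LeafConn G σ).IsTree := by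
  intro hL
  have hGcard : m G + 1 = Fintype.card V := hG.card_edgeFinset
  have hLcard : m (LeafConn G σ) + 1 = Fintype.card (V ⊕ Leaves G) := hL.card_edgeFinset
  rw [m_leafConn G hinv hnf, card_sum_leaves] at hLcard
  omega

end LeafConnecting

end Neutral

/-- if `T` is a neutral tree on `n₁ ≥ 7` vertices and `T†` is obtained by
the leaf-connecting operation (attach `d_v` new leaves to each vertex `v`, then pair up
all new leaves by a perfect matching `σ`), then `T†` is neutral, has `3n₁ - 2`
vertices, and is not a tree. -/
theorem stmt_8 {V : Type*} [Fintype V] (T : SimpleGraph V) (n₁ : ℕ)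
    (hcard : Fintype.card V = n₁) (hn : 7 ≤ n₁)
    (htree : T.IsTree) (hneutral : 4 * m T * dd T = (ds T) ^ 2)
    (σ : Leaves T → Leaves T) (hinv : Function.Involutive σ) (hnf : ∀ a, σ a ≠ a) :
    4 * m (LeafConn T σ) * dd (LeafConn T σ) = (ds (LeafConn T σ)) ^ 2 ∧
      Fintype.card (V ⊕ Leaves T) = 3 * n₁ - 2 ∧
      ¬ (LeafConn T σ).IsTree := by
  have hm : m T + 1 = n₁ := hcard ▸ htree.card_edgeFinset
  refine ⟨neutral_leafConn T hinv hnf hneutral, ?_,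
    not_isTree_leafConn T hinv hnf htree (by omega)⟩
  rw [card_sum_leaves, hcard]
  omega
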